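/- Let 1≤p<∞, r>0, and let ρ be a metric on ℂⁿ with values norms on ℂᵈ. Suppose that for each cube Q⊂ℂⁿ of side length r there are positive invertible self-adjoint d×d matrices R_Q and R*_Q satisfying ρ_{p,Q}(x) ≤ |R_Q x| ≤ √d·ρ_{p,Q}(x) and ρ*_{p',Q}(x) ≤ |R*_Q x| ≤ √d·ρ*_{p',Q}(x) for all x∈ℂᵈ. Then ρ is an A_{p,r}-metric if and only if sup over cubes Q of side length r of the operator norm ‖R_Q R*_Q‖ is finite; moreover A_{p,r}(ρ) ≤ sup_Q ‖R_Q R*_Q‖ ≤ d·A_{p,r}(ρ). -/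

import Mathlib

open MeasureTheory ENNReal
open scoped ComplexOrder

noncomputable section

/-- `ℂⁿ` as a Euclidean space. -/
abbrev Cspace (n : ℕ) := EuclideanSpace ℂ (Fin n)

/-- Lebesgue measure on `ℂⁿ`. -/
instance CspaceMeasureSpace (n : ℕ) : MeasureSpace (Cspace n) :=
  ⟨Measure.map (MeasurableEquiv.toLp 2 (Fin n → ℂ)) volume⟩

/-- The (closed) cube in `ℂⁿ ≅ ℝ^{2n}` centered at `u` with side length `r`. -/
def cube {n : ℕ} (u : Cspace n) (r : ℝ) : Set (Cspace n) :=
  {z | ∀ j, |(z j).re - (u j).re| ≤ r / 2 ∧ |(z j).im - (u j).im| ≤ r / 2}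

/-- A `d × d` complex matrix acting on the Euclidean space `ℂᵈ`. -/
def matAct {d : ℕ} (M : Matrix (Fin d) (Fin d) ℂ) (x : EuclideanSpace ℂ (Fin d)) :
    EuclideanSpace ℂ (Fin d) :=
  Matrix.toEuclideanLin M x

/-- The operator norm of a `d × d` matrix acting on Euclidean `ℂᵈ`. -/
def matOpNorm {d : ℕ} (M : Matrix (Fin d) (Fin d) ℂ) : ℝ :=
  ‖(Matrix.toEuclideanCLM (𝕜 := ℂ) M :
      EuclideanSpace ℂ (Fin d) →L[ℂ] EuclideanSpace ℂ (Fin d))‖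

open scoped Classical in
/-- The real power `M ^ t` of a positive definite (Hermitian) matrix, defined through the
spectral functional calculus; junk value `1` if `M` is not positive definite. -/
def matRpow {d : ℕ} (M : Matrix (Fin d) (Fin d) ℂ) (t : ℝ) : Matrix (Fin d) (Fin d) ℂ :=
  if h : M.PosDef then h.1.cfc (fun x => x ^ t) else 1

/-- A matrix weight: measurable, a.e. positive definite (hence invertible self-adjoint),
with `W` and `W⁻¹` locally integrable. -/
def IsMatrixWeight {n d : ℕ} (W : Cspace n → Matrix (Fin d) (Fin d) ℂ) : Prop :=
  (∀ i j, Measurable fun z => W z i j) ∧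
  (∀ᵐ z ∂(volume : Measure (Cspace n)), (W z).PosDef) ∧
  (∀ i j, LocallyIntegrable (fun z => W z i j) volume) ∧
  (∀ i j, LocallyIntegrable (fun z => (W z)⁻¹ i j) volume)

/-- The Gaussian density `(α/π)^n e^{-α|u|²}`. -/
def gaussDensity {n : ℕ} (α : ℝ) (u : Cspace n) : ℝ :=
  (α / Real.pi) ^ n * Real.exp (-α * ‖u‖ ^ 2)

/-- The `L^p_α`-norm `(∫ ‖f(z)‖^p e^{-(pα/2)|z|²} dv(z))^{1/p}` (value in `ℝ≥0∞`). -/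
def lpNormGen {E : Type*} [NormedAddCommGroup E] {n : ℕ} (α p : ℝ) (f : Cspace n → E) : ℝ≥0∞ :=
  (∫⁻ z, (‖f z‖₊ : ℝ≥0∞) ^ p * ENNReal.ofReal (Real.exp (-(p * α / 2) * ‖z‖ ^ 2))) ^ (1 / p)

/-- The norm of `L^p_{α,W}(ℂⁿ;ℂᵈ)`. -/
def wLpNorm {n d : ℕ} (α p : ℝ) (W : Cspace n → Matrix (Fin d) (Fin d) ℂ)
    (f : Cspace n → EuclideanSpace ℂ (Fin d)) : ℝ≥0∞ :=
  lpNormGen α p (fun z => matAct (matRpow (W z) (1 / p)) (f z))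

/-- The norm of `L^∞_{α,V}(ℂⁿ;ℂᵈ)`: `ess sup |V(z) f(z)| e^{-(α/2)|z|²}`. -/
def wLinfNorm {n d : ℕ} (α : ℝ) (V : Cspace n → Matrix (Fin d) (Fin d) ℂ)
    (f : Cspace n → EuclideanSpace ℂ (Fin d)) : ℝ≥0∞ :=
  essSup (fun z => (‖matAct (V z) (f z)‖₊ : ℝ≥0∞) *
    ENNReal.ofReal (Real.exp (-(α / 2) * ‖z‖ ^ 2))) volume

/-- The Fock projection `P_α f(z) = ∫ f(u) e^{α⟨z,u⟩} dλ_α(u)`. -/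
def fockProj {n d : ℕ} (α : ℝ) (f : Cspace n → EuclideanSpace ℂ (Fin d)) :
    Cspace n → EuclideanSpace ℂ (Fin d) :=
  fun z => ∫ u, gaussDensity α u • (Complex.exp ((α : ℂ) * (inner ℂ u z : ℂ)) • f u)

/-- The maximal Fock projection
`P⁺_{α,W} f(z) = ∫ |W^{1/p}(z) W^{-1/p}(u) f(u)| |e^{α⟨z,u⟩}| dλ_α(u)`. -/
def maxFockProj {n d : ℕ} (α p : ℝ) (W : Cspace n → Matrix (Fin d) (Fin d) ℂ)
    (f : Cspace n → EuclideanSpace ℂ (Fin d)) : Cspace n → ℝ :=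
  fun z => ∫ u, gaussDensity α u *
    (‖matAct (matRpow (W z) (1 / p)) (matAct (matRpow (W u) (-(1 / p))) (f u))‖ *
      ‖Complex.exp ((α : ℂ) * (inner ℂ u z : ℂ))‖)

/-- `P_α` is bounded on `L^p_{α,W}(ℂⁿ;ℂᵈ)` with constant `C`. -/
def FockProjBdd {n d : ℕ} (α p : ℝ) (W : Cspace n → Matrix (Fin d) (Fin d) ℂ) (C : ℝ) : Prop :=
  ∀ f : Cspace n → EuclideanSpace ℂ (Fin d), Measurable f → wLpNorm α p W f < ⊤ →
    wLpNorm α p W (fockProj α f) ≤ ENNReal.ofReal C * wLpNorm α p W f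

/-- `P⁺_{α,W}` is bounded from `L^p_α(ℂⁿ;ℂᵈ)` to `L^p_α(ℂⁿ;ℂ)` with constant `C`. -/
def MaxFockProjBdd {n d : ℕ} (α p : ℝ) (W : Cspace n → Matrix (Fin d) (Fin d) ℂ) (C : ℝ) : Prop :=
  ∀ f : Cspace n → EuclideanSpace ℂ (Fin d), Measurable f → lpNormGen α p f < ⊤ →
    lpNormGen α p (maxFockProj α p W f) ≤ ENNReal.ofReal C * lpNormGen α p f

/-- The normalized reproducing kernel `k^α_u(z) = e^{α⟨z,u⟩ - (α/2)|u|²}`. -/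
def fockKernel {n : ℕ} (α : ℝ) (u : Cspace n) (z : Cspace n) : ℂ :=
  Complex.exp ((α : ℂ) * (inner ℂ u z : ℂ) - ((α / 2 * ‖u‖ ^ 2 : ℝ) : ℂ))

/-- The operator `P_{α,u,r} f = χ_{Q_r(u)} k^α_u ∫_{Q_r(u)} f conj(k^α_u) dλ_α`. -/
def cubeProj {n d : ℕ} (α : ℝ) (u : Cspace n) (r : ℝ)
    (f : Cspace n → EuclideanSpace ℂ (Fin d)) : Cspace n → EuclideanSpace ℂ (Fin d) :=
  fun z => Set.indicator (cube u r)
    (fun w => fockKernel α u w •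
      (∫ ζ in cube u r, gaussDensity α ζ • ((starRingEnd ℂ) (fockKernel α u ζ) • f ζ))) z

/-- The pairing `⟨f,g⟩_α = ∫ ⟨f(z), g(z)⟩ e^{-α|z|²} dv(z)` (the inner product being linear
in the first slot and conjugate-linear in the second one). -/
def fockPairing {n d : ℕ} (α : ℝ) (f g : Cspace n → EuclideanSpace ℂ (Fin d)) : ℂ :=
  ∫ z, Real.exp (-α * ‖z‖ ^ 2) • (inner ℂ (g z) (f z) : ℂ)

/-- A norm on `ℂᵈ` (as a real-valued function). -/
def IsANorm {d : ℕ} (g : EuclideanSpace ℂ (Fin d) → ℝ) : Prop :=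
  (∀ x, x ≠ 0 → 0 < g x) ∧ (∀ (c : ℂ) x, g (c • x) = ‖c‖ * g x) ∧
  (∀ x y, g (x + y) ≤ g x + g y)

/-- A metric: a measurable family of norms on `ℂᵈ` indexed by `ℂⁿ`. -/
def IsMetric {n d : ℕ} (ρ : Cspace n → EuclideanSpace ℂ (Fin d) → ℝ) : Prop :=
  (∀ z, IsANorm (ρ z)) ∧ (∀ x, Measurable fun z => ρ z x)

/-- The dual norm `ρ*(x) = sup_{y ≠ 0} |⟨x,y⟩| / ρ(y)` (value in `ℝ≥0∞`). -/
def dualNormE {d : ℕ} (g : EuclideanSpace ℂ (Fin d) → ℝ) (x : EuclideanSpace ℂ (Fin d)) :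
    ℝ≥0∞ :=
  ⨆ (y : EuclideanSpace ℂ (Fin d)) (_ : y ≠ 0),
    (‖(inner ℂ y x : ℂ)‖₊ : ℝ≥0∞) / ENNReal.ofReal (g y)

/-- The dual of an `ℝ≥0∞`-valued gauge on `ℂᵈ`. -/
def dualGaugeE {d : ℕ} (G : EuclideanSpace ℂ (Fin d) → ℝ≥0∞) (x : EuclideanSpace ℂ (Fin d)) :
    ℝ≥0∞ :=
  ⨆ (y : EuclideanSpace ℂ (Fin d)) (_ : y ≠ 0), (‖(inner ℂ y x : ℂ)‖₊ : ℝ≥0∞) / G y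

/-- The `q`-average of an `ℝ≥0∞`-valued gauge family over a set `Q`:
`((1/v(Q)) ∫_Q F_z(x)^q dv(z))^{1/q}`. -/
def avgGauge {n d : ℕ} (q : ℝ) (Q : Set (Cspace n))
    (F : Cspace n → EuclideanSpace ℂ (Fin d) → ℝ≥0∞) (x : EuclideanSpace ℂ (Fin d)) : ℝ≥0∞ :=
  ((∫⁻ z in Q, (F z x) ^ q) / volume Q) ^ (1 / q)

/-- The averaged norm `ρ_{q,Q}(x) = ((1/v(Q)) ∫_Q ρ_z(x)^q dv(z))^{1/q}`. -/
def metricAvg {n d : ℕ} (q : ℝ) (Q : Set (Cspace n))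
    (ρ : Cspace n → EuclideanSpace ℂ (Fin d) → ℝ) (x : EuclideanSpace ℂ (Fin d)) : ℝ≥0∞ :=
  avgGauge q Q (fun z y => ENNReal.ofReal (ρ z y)) x

/-- The averaged dual norm `ρ*_{p',Q}` where `p'` is the conjugate exponent of `p`
(`ess sup` over `Q` of the pointwise dual norms when `p = 1`, i.e. `p' = ∞`). -/
def metricDualAvg {n d : ℕ} (p : ℝ) (Q : Set (Cspace n))
    (ρ : Cspace n → EuclideanSpace ℂ (Fin d) → ℝ) (x : EuclideanSpace ℂ (Fin d)) : ℝ≥0∞ :=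
  if p = 1 then essSup (fun z => dualNormE (ρ z) x) (volume.restrict Q)
  else avgGauge (p / (p - 1)) Q (fun z => dualNormE (ρ z)) x

/-- The `A_{p,r}`-condition for a metric `ρ`, with constant `C`:
`ρ*_{p',Q}(x) ≤ C (ρ_{p,Q})*(x)` for all `x ∈ ℂᵈ` and all cubes `Q` of side length `r`. -/
def IsAprBound {n d : ℕ} (p r : ℝ) (ρ : Cspace n → EuclideanSpace ℂ (Fin d) → ℝ) (C : ℝ) :
    Prop :=
  ∀ (u : Cspace n) (x : EuclideanSpace ℂ (Fin d)),
    metricDualAvg p (cube u r) ρ x ≤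
      ENNReal.ofReal C * dualGaugeE (metricAvg p (cube u r) ρ) x

/-- `ρ` is an `A_{p,r}`-metric. -/
def IsAprMetric {n d : ℕ} (p r : ℝ) (ρ : Cspace n → EuclideanSpace ℂ (Fin d) → ℝ) : Prop :=
  ∃ C : ℝ, 0 ≤ C ∧ IsAprBound p r ρ C

/-- The metric `ρ_z(x) = |W^{1/p}(z) x|` associated with a matrix weight `W`. -/
def weightMetric {n d : ℕ} (p : ℝ) (W : Cspace n → Matrix (Fin d) (Fin d) ℂ) :
    Cspace n → EuclideanSpace ℂ (Fin d) → ℝ :=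
  fun z x => ‖matAct (matRpow (W z) (1 / p)) x‖

/-- `W` is an `A_{p,r}`-weight. -/
def IsAprWeight {n d : ℕ} (p r : ℝ) (W : Cspace n → Matrix (Fin d) (Fin d) ℂ) : Prop :=
  IsAprMetric p r (weightMetric p W)

end

/-!
Write `N = ρ_{p,Q}`, `N' = ρ*_{p',Q}` and `N^*` for the dual of `N`. For Hermitian invertible `R`,
Cauchy–Schwarz in the form `⟨y, x⟩ = ⟨R y, R⁻¹ x⟩` shows that the dual of `|R ·|` is `|R⁻¹ ·|`,
and passing to duals reverses inequalities between gauges. Hence `N ≤ |R_Q ·|` gives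
`N' ≤ |R*_Q ·| ≤ ‖R*_Q R_Q‖ |R_Q⁻¹ ·| ≤ ‖R_Q R*_Q‖ N^*`, while `|R_Q ·| ≤ √d N` and
`|R*_Q ·| ≤ √d N'` turn the `A_{p,r}` bound `N' ≤ C N^*` into
`|R*_Q R_Q y| ≤ √d C √d |R_Q⁻¹ R_Q y| = d C |y|`.
-/

open Matrix

section

variable {d : ℕ}

section MatAct

theorem matAct_mul (M N : Matrix (Fin d) (Fin d) ℂ) (x : EuclideanSpace ℂ (Fin d)) :
    matAct (M * N) x = matAct M (matAct N x) := by
  simp [matAct, Matrix.toEuclideanLin]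

theorem matAct_one (x : EuclideanSpace ℂ (Fin d)) :
    matAct (1 : Matrix (Fin d) (Fin d) ℂ) x = x := by
  simp [matAct]

theorem matAct_zero (M : Matrix (Fin d) (Fin d) ℂ) : matAct M 0 = 0 :=
  map_zero (Matrix.toEuclideanLin M)

theorem matAct_inv_matAct {M : Matrix (Fin d) (Fin d) ℂ} (hM : IsUnit M.det)
    (x : EuclideanSpace ℂ (Fin d)) : matAct M⁻¹ (matAct M x) = x := by
  rw [← matAct_mul, Matrix.nonsing_inv_mul M hM, matAct_one]

theorem matAct_matAct_inv {M : Matrix (Fin d) (Fin d) ℂ} (hM : IsUnit M.det)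
    (x : EuclideanSpace ℂ (Fin d)) : matAct M (matAct M⁻¹ x) = x := by
  rw [← matAct_mul, Matrix.mul_nonsing_inv M hM, matAct_one]

theorem matAct_ne_zero {M : Matrix (Fin d) (Fin d) ℂ} (hM : IsUnit M.det)
    {x : EuclideanSpace ℂ (Fin d)} (hx : x ≠ 0) : matAct M x ≠ 0 := fun h =>
  hx (by rw [← matAct_inv_matAct hM x, h, matAct_zero])

theorem inner_matAct_left (M : Matrix (Fin d) (Fin d) ℂ) (x y : EuclideanSpace ℂ (Fin d)) :
    (inner ℂ (matAct M y) x : ℂ) = inner ℂ y (matAct Mᴴ x) := by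
  unfold matAct
  rw [Matrix.toEuclideanLin_conjTranspose_eq_adjoint, LinearMap.adjoint_inner_right]

theorem inner_eq_inner_matAct_matAct_inv {M : Matrix (Fin d) (Fin d) ℂ} (hM : M.IsHermitian)
    (hMu : IsUnit M.det) (x y : EuclideanSpace ℂ (Fin d)) :
    (inner ℂ y x : ℂ) = inner ℂ (matAct M y) (matAct M⁻¹ x) := by
  rw [inner_matAct_left, hM.eq, matAct_matAct_inv hMu]

theorem norm_matAct_le (M : Matrix (Fin d) (Fin d) ℂ) (x : EuclideanSpace ℂ (Fin d)) :
    ‖matAct M x‖ ≤ matOpNorm M * ‖x‖ :=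
  (Matrix.toEuclideanCLM (𝕜 := ℂ) M).le_opNorm x

theorem matOpNorm_nonneg (M : Matrix (Fin d) (Fin d) ℂ) : 0 ≤ matOpNorm M :=
  norm_nonneg _

theorem matOpNorm_le_of_norm_matAct_le {M : Matrix (Fin d) (Fin d) ℂ} {B : ℝ} (hB : 0 ≤ B)
    (h : ∀ x, ‖matAct M x‖ ≤ B * ‖x‖) : matOpNorm M ≤ B :=
  ContinuousLinearMap.opNorm_le_bound _ hB h

theorem matOpNorm_conjTranspose (M : Matrix (Fin d) (Fin d) ℂ) :
    matOpNorm Mᴴ = matOpNorm M := by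
  rw [matOpNorm, show Mᴴ = star M from rfl, map_star, ContinuousLinearMap.star_eq_adjoint]
  exact ContinuousLinearMap.adjoint.norm_map _

theorem matOpNorm_mul_comm {M N : Matrix (Fin d) (Fin d) ℂ} (hM : M.IsHermitian)
    (hN : N.IsHermitian) : matOpNorm (M * N) = matOpNorm (N * M) := by
  rw [← matOpNorm_conjTranspose (N * M), conjTranspose_mul, hM.eq, hN.eq]

end MatAct

section DualGauge

theorem dualGaugeE_antitone : Antitone (dualGaugeE (d := d)) := fun _ _ h _ =>
  iSup₂_mono fun y _ => ENNReal.div_le_div_left (h y) _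

theorem const_mul_dualGaugeE_const_mul {c : ℝ≥0∞} (hc : c ≠ 0) (hc' : c ≠ ⊤)
    (G : EuclideanSpace ℂ (Fin d) → ℝ≥0∞) (x : EuclideanSpace ℂ (Fin d)) :
    c * dualGaugeE (fun y => c * G y) x = dualGaugeE G x := by
  simp only [dualGaugeE, ENNReal.mul_iSup, ← mul_div_assoc, ENNReal.mul_div_mul_left _ _ hc hc']

theorem nnnorm_inner_le_mul (M : Matrix (Fin d) (Fin d) ℂ) (hM : M.IsHermitian)
    (hMu : IsUnit M.det) (x y : EuclideanSpace ℂ (Fin d)) :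
    (‖(inner ℂ y x : ℂ)‖₊ : ℝ≥0∞) ≤
      ENNReal.ofReal ‖matAct M⁻¹ x‖ * ENNReal.ofReal ‖matAct M y‖ := by
  rw [← ENNReal.ofReal_mul (norm_nonneg _), ← ENNReal.ofReal_coe_nnreal, coe_nnnorm,
    inner_eq_inner_matAct_matAct_inv hM hMu, mul_comm]
  exact ENNReal.ofReal_le_ofReal (norm_inner_le_norm _ _)

theorem dualGaugeE_norm_matAct {M : Matrix (Fin d) (Fin d) ℂ} (hM : M.IsHermitian)
    (hMu : IsUnit M.det) (x : EuclideanSpace ℂ (Fin d)) :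
    dualGaugeE (fun y => ENNReal.ofReal ‖matAct M y‖) x = ENNReal.ofReal ‖matAct M⁻¹ x‖ := by
  refine le_antisymm (iSup₂_le fun y _ => ENNReal.div_le_of_le_mul
    (nnnorm_inner_le_mul M hM hMu x y)) ?_
  rcases eq_or_ne x 0 with rfl | hx
  · simp [matAct_zero]
  -- the supremum is attained at `y = M⁻¹ (M⁻¹ x)`
  set w := matAct M⁻¹ x
  have hMinv : IsUnit M⁻¹.det := (isUnit_nonsing_inv_det_iff).mpr hMu
  have hw : w ≠ 0 := matAct_ne_zero hMinv hx
  have hMy : matAct M (matAct M⁻¹ w) = w := matAct_matAct_inv hMu w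
  have hinner : (inner ℂ (matAct M⁻¹ w) x : ℂ) = inner ℂ w w := by
    rw [inner_eq_inner_matAct_matAct_inv hM hMu, hMy]
  have hnorm : ‖(inner ℂ w w : ℂ)‖ = ‖w‖ * ‖w‖ := by
    rw [inner_self_eq_norm_sq_to_K (𝕜 := ℂ)]
    simp [sq]
  refine le_trans ?_ (le_iSup₂ (f := fun (y : EuclideanSpace ℂ (Fin d)) (_ : y ≠ 0) =>
    (‖(inner ℂ y x : ℂ)‖₊ : ℝ≥0∞) / ENNReal.ofReal ‖matAct M y‖) _ (matAct_ne_zero hMinv hw))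
  rw [hinner, hMy, ← ENNReal.ofReal_coe_nnreal, coe_nnnorm, hnorm,
    ENNReal.ofReal_mul (norm_nonneg _), mul_div_assoc,
    ENNReal.div_self (by simpa using hw) ENNReal.ofReal_ne_top, mul_one]

theorem dualGaugeE_le_of_norm_matAct_le {M : Matrix (Fin d) (Fin d) ℂ} (hM : M.IsHermitian)
    (hMu : IsUnit M.det) {G : EuclideanSpace ℂ (Fin d) → ℝ≥0∞} {c : ℝ} (hc : 0 < c)
    (h : ∀ y, ENNReal.ofReal ‖matAct M y‖ ≤ ENNReal.ofReal c * G y)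
    (x : EuclideanSpace ℂ (Fin d)) :
    dualGaugeE G x ≤ ENNReal.ofReal c * ENNReal.ofReal ‖matAct M⁻¹ x‖ := by
  rw [← const_mul_dualGaugeE_const_mul (ENNReal.ofReal_pos.mpr hc).ne' ENNReal.ofReal_ne_top,
    ← dualGaugeE_norm_matAct hM hMu]
  gcongr
  exact dualGaugeE_antitone h x

end DualGauge

section ReducingOperators

variable {G G' : EuclideanSpace ℂ (Fin d) → ℝ≥0∞} {R Rs : Matrix (Fin d) (Fin d) ℂ}

theorem le_matOpNorm_mul_dualGaugeE (hR : R.IsHermitian) (hRu : IsUnit R.det)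
    (hRs : Rs.IsHermitian) (hG : ∀ y, G y ≤ ENNReal.ofReal ‖matAct R y‖)
    (hG' : ∀ x, G' x ≤ ENNReal.ofReal ‖matAct Rs x‖) (x : EuclideanSpace ℂ (Fin d)) :
    G' x ≤ ENNReal.ofReal (matOpNorm (R * Rs)) * dualGaugeE G x := by
  calc G' x ≤ ENNReal.ofReal ‖matAct Rs x‖ := hG' x
    _ = ENNReal.ofReal ‖matAct (Rs * R) (matAct R⁻¹ x)‖ := by
        rw [matAct_mul, matAct_matAct_inv hRu]
    _ ≤ ENNReal.ofReal (matOpNorm (R * Rs) * ‖matAct R⁻¹ x‖) := by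
        rw [matOpNorm_mul_comm hR hRs]
        exact ENNReal.ofReal_le_ofReal (norm_matAct_le _ _)
    _ = ENNReal.ofReal (matOpNorm (R * Rs)) *
          dualGaugeE (fun y => ENNReal.ofReal ‖matAct R y‖) x := by
        rw [dualGaugeE_norm_matAct hR hRu, ENNReal.ofReal_mul (matOpNorm_nonneg _)]
    _ ≤ ENNReal.ofReal (matOpNorm (R * Rs)) * dualGaugeE G x := by
        gcongr
        exact dualGaugeE_antitone hG x

theorem matOpNorm_mul_le_of_le_dualGaugeE (hR : R.IsHermitian) (hRu : IsUnit R.det)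
    (hRs : Rs.IsHermitian) {c c' C : ℝ} (hc : 0 < c) (hc' : 0 ≤ c') (hC : 0 ≤ C)
    (hG : ∀ y, ENNReal.ofReal ‖matAct R y‖ ≤ ENNReal.ofReal c * G y)
    (hG' : ∀ x, ENNReal.ofReal ‖matAct Rs x‖ ≤ ENNReal.ofReal c' * G' x)
    (hGG' : ∀ x, G' x ≤ ENNReal.ofReal C * dualGaugeE G x) :
    matOpNorm (R * Rs) ≤ c' * C * c := by
  rw [matOpNorm_mul_comm hR hRs]
  refine matOpNorm_le_of_norm_matAct_le (by positivity) fun y => ?_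
  rw [← ENNReal.ofReal_le_ofReal_iff (by positivity), matAct_mul]
  calc ENNReal.ofReal ‖matAct Rs (matAct R y)‖
      ≤ ENNReal.ofReal c' * (ENNReal.ofReal C * dualGaugeE G (matAct R y)) :=
        (hG' _).trans (by gcongr; exact hGG' _)
    _ ≤ ENNReal.ofReal c' * (ENNReal.ofReal C *
          (ENNReal.ofReal c * ENNReal.ofReal ‖matAct R⁻¹ (matAct R y)‖)) := by
        gcongr
        exact dualGaugeE_le_of_norm_matAct_le hR hRu hc hG _
    _ = ENNReal.ofReal (c' * C * c * ‖y‖) := by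
        rw [matAct_inv_matAct hRu, ENNReal.ofReal_mul (by positivity),
          ENNReal.ofReal_mul (by positivity), ENNReal.ofReal_mul hc']
        ring

end ReducingOperators

end

theorem stmt10_general {n d : ℕ} (hd : 0 < d) (p r : ℝ)
    (ρ : Cspace n → EuclideanSpace ℂ (Fin d) → ℝ)
    (R Rs : Cspace n → Matrix (Fin d) (Fin d) ℂ)
    (hRpos : ∀ u, (R u).PosDef) (hRspos : ∀ u, (Rs u).PosDef)
    (hR : ∀ u x, metricAvg p (cube u r) ρ x ≤ ENNReal.ofReal ‖matAct (R u) x‖ ∧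
      ENNReal.ofReal ‖matAct (R u) x‖ ≤
        ENNReal.ofReal (Real.sqrt d) * metricAvg p (cube u r) ρ x)
    (hRs : ∀ u x, metricDualAvg p (cube u r) ρ x ≤ ENNReal.ofReal ‖matAct (Rs u) x‖ ∧
      ENNReal.ofReal ‖matAct (Rs u) x‖ ≤
        ENNReal.ofReal (Real.sqrt d) * metricDualAvg p (cube u r) ρ x) :
    (IsAprMetric p r ρ ↔ ∃ B : ℝ, ∀ u, matOpNorm (R u * Rs u) ≤ B) ∧
    (∀ B : ℝ, (∀ u, matOpNorm (R u * Rs u) ≤ B) → IsAprBound p r ρ B) ∧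
    (∀ C : ℝ, 0 ≤ C → IsAprBound p r ρ C → ∀ u, matOpNorm (R u * Rs u) ≤ d * C) := by
  have hRu : ∀ u, IsUnit (R u).det := fun u => (isUnit_iff_isUnit_det _).mp (hRpos u).isUnit
  have upper : ∀ B : ℝ, (∀ u, matOpNorm (R u * Rs u) ≤ B) → IsAprBound p r ρ B :=
    fun B hB u x => (le_matOpNorm_mul_dualGaugeE (hRpos u).1 (hRu u) (hRspos u).1
      (fun y => (hR u y).1) (fun y => (hRs u y).1) x).trans (by gcongr; exact hB u)
  have lower : ∀ C : ℝ, 0 ≤ C → IsAprBound p r ρ C →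
      ∀ u, matOpNorm (R u * Rs u) ≤ d * C := by
    intro C hC hApr u
    have hsqrt : 0 < Real.sqrt d := Real.sqrt_pos.mpr (by exact_mod_cast hd)
    calc matOpNorm (R u * Rs u) ≤ Real.sqrt d * C * Real.sqrt d :=
          matOpNorm_mul_le_of_le_dualGaugeE (hRpos u).1 (hRu u) (hRspos u).1 hsqrt hsqrt.le hC
            (fun y => (hR u y).2) (fun y => (hRs u y).2) (hApr u)
      _ = d * C := by rw [mul_right_comm, Real.mul_self_sqrt (Nat.cast_nonneg d)]
  refine ⟨⟨fun ⟨C, hC, hApr⟩ => ⟨d * C, lower C hC hApr⟩, fun ⟨B, hB⟩ =>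
    ⟨B, (matOpNorm_nonneg _).trans (hB 0), upper B hB⟩⟩, upper, lower⟩

/-- in terms of the reducing operators `R_Q`, `R*_Q` of `ρ_{p,Q}` and
`ρ*_{p',Q}`, the metric `ρ` is an `A_{p,r}`-metric iff `sup_Q ‖R_Q R*_Q‖ < ∞`, with
`A_{p,r}(ρ) ≤ sup_Q ‖R_Q R*_Q‖ ≤ d ⬝ A_{p,r}(ρ)`. -/
theorem stmt10 {n d : ℕ} (hn : 0 < n) (hd : 0 < d) (p r : ℝ) (hp : 1 ≤ p) (hr : 0 < r)
    (ρ : Cspace n → EuclideanSpace ℂ (Fin d) → ℝ) (hρ : IsMetric ρ)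
    (R Rs : Cspace n → Matrix (Fin d) (Fin d) ℂ)
    (hRpos : ∀ u, (R u).PosDef) (hRspos : ∀ u, (Rs u).PosDef)
    (hR : ∀ u x, metricAvg p (cube u r) ρ x ≤ ENNReal.ofReal ‖matAct (R u) x‖ ∧
      ENNReal.ofReal ‖matAct (R u) x‖ ≤
        ENNReal.ofReal (Real.sqrt d) * metricAvg p (cube u r) ρ x)
    (hRs : ∀ u x, metricDualAvg p (cube u r) ρ x ≤ ENNReal.ofReal ‖matAct (Rs u) x‖ ∧
      ENNReal.ofReal ‖matAct (Rs u) x‖ ≤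
        ENNReal.ofReal (Real.sqrt d) * metricDualAvg p (cube u r) ρ x) :
    (IsAprMetric p r ρ ↔ ∃ B : ℝ, ∀ u, matOpNorm (R u * Rs u) ≤ B) ∧
    (∀ B : ℝ, (∀ u, matOpNorm (R u * Rs u) ≤ B) → IsAprBound p r ρ B) ∧
    (∀ C : ℝ, 0 ≤ C → IsAprBound p r ρ C → ∀ u, matOpNorm (R u * Rs u) ≤ d * C) :=
  stmt10_general hd p r ρ R Rs hRpos hRspos hR hRs
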